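/- (Lemma 1, second part.) For the unique fixed point J* of the Bellman operator T of the decoupled single-source subproblem, and for every state (E,K) with E ≥ Es, the post-probing cost-to-go W_{J*}(E,K,p) is nonincreasing in the packet-success probability p: for all 0 ≤ p ≤ p' ≤ 1, W_{J*}(E,K,p') ≤ W_{J*}(E,K,p). -/

import Mathlib

open Finset Filter Topology

/-- Energy level after one unit of energy arrival, clamped at buffer size `B`. -/
def clampAdd {B : ℕ} (e : Fin (B+1)) : Fin (B+1) :=
  ⟨min (e.val + 1) B, by omega⟩

/-- Energy level after spending `Es` units of energy. -/
def subE {B : ℕ} (Es : ℕ) (e : Fin (B+1)) : Fin (B+1) :=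
  ⟨e.val - Es, by have := e.isLt; omega⟩

/-- Age update `K⁺ = min (K+1) Kmax`; ages in `{1,…,Kmax}` are represented by
`Fin Kmax`, where index `k` stands for age `k+1`. -/
def succAge {Kmax : ℕ} (k : Fin Kmax) : Fin Kmax :=
  ⟨min (k.val + 1) (Kmax - 1), by have := k.isLt; omega⟩

/-- The state of age `1` (index `0`). -/
def ageOne {Kmax : ℕ} (k : Fin Kmax) : Fin Kmax := ⟨0, k.pos⟩

/-- The real-valued age of a state with age index `k`. -/
def ageVal {Kmax : ℕ} (k : Fin Kmax) : ℝ := (k.val : ℝ) + 1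

/-- `G_J(E,K) = λ·J(min(E+1,B),K) + (1−λ)·J(E,K)`. -/
noncomputable def GVal {B Kmax : ℕ} (lam : ℝ) (J : Fin (B+1) × Fin Kmax → ℝ)
    (e : Fin (B+1)) (k : Fin Kmax) : ℝ :=
  lam * J (clampAdd e, k) + (1 - lam) * J (e, k)

/-- The not-sampling value `u_J(E,K) = K + α·G_J(E,K⁺)`. -/
noncomputable def uVal {B Kmax : ℕ} (lam alpha : ℝ) (J : Fin (B+1) × Fin Kmax → ℝ)
    (e : Fin (B+1)) (k : Fin Kmax) : ℝ :=
  ageVal k + alpha * GVal lam J e (succAge k)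

/-- The expected sampling cost
`σ_J(p) = K·(1−p) + α·p·G_J(E−Es,1) + α·(1−p)·G_J(E−Es,K⁺)`. -/
noncomputable def sigVal {B Kmax : ℕ} (Es : ℕ) (lam alpha : ℝ)
    (J : Fin (B+1) × Fin Kmax → ℝ) (e : Fin (B+1)) (k : Fin Kmax) (p : ℝ) : ℝ :=
  ageVal k * (1 - p) + alpha * p * GVal lam J (subE Es e) (ageOne k)
    + alpha * (1 - p) * GVal lam J (subE Es e) (succAge k)

/-- The post-probing value `W_J(E,K,p) = min { u_J(E,K), σ_J(p) }`. -/
noncomputable def WVal {B Kmax : ℕ} (Es : ℕ) (lam alpha : ℝ)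
    (J : Fin (B+1) × Fin Kmax → ℝ) (e : Fin (B+1)) (k : Fin Kmax) (p : ℝ) : ℝ :=
  min (uVal lam alpha J e k) (sigVal Es lam alpha J e k p)

/-- The probing value `v_J(E,K) = μ̂ + Σ_j q_j · W_J(E,K,p_j)`. -/
noncomputable def vVal {B Kmax : ℕ} (Es m : ℕ) (lam alpha mu : ℝ)
    (q pr : Fin m → ℝ) (J : Fin (B+1) × Fin Kmax → ℝ)
    (e : Fin (B+1)) (k : Fin Kmax) : ℝ :=
  mu + ∑ j, q j * WVal Es lam alpha J e k (pr j)

/-- The Bellman operator `T` of the decoupled single-source subproblem. -/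
noncomputable def bellman {B Kmax : ℕ} (Es m : ℕ) (lam alpha mu : ℝ)
    (q pr : Fin m → ℝ) (J : Fin (B+1) × Fin Kmax → ℝ) :
    Fin (B+1) × Fin Kmax → ℝ :=
  fun s =>
    if Es ≤ s.1.val then
      min (uVal lam alpha J s.1 s.2) (vVal Es m lam alpha mu q pr J s.1 s.2)
    else uVal lam alpha J s.1 s.2

section AuxW

variable {B Kmax : ℕ}

lemma succAge_mono_val {k k' : Fin Kmax} (h : k.val ≤ k'.val) :
    (succAge k).val ≤ (succAge k').val := by
  simp only [succAge]; omega

/-- `J` is nondecreasing in the age coordinate. -/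
def MonoK (J : Fin (B+1) × Fin Kmax → ℝ) : Prop :=
  ∀ (e : Fin (B+1)) (k k' : Fin Kmax), k.val ≤ k'.val → J (e, k) ≤ J (e, k')

lemma ageVal_mono {k k' : Fin Kmax} (h : k.val ≤ k'.val) : ageVal k ≤ ageVal k' := by
  unfold ageVal
  have : (k.val : ℝ) ≤ k'.val := by exact_mod_cast h
  linarith

lemma ageVal_nonneg (k : Fin Kmax) : (0:ℝ) ≤ ageVal k := by
  unfold ageVal; positivity

lemma GVal_monoK {lam : ℝ} (hlam0 : 0 ≤ lam) (hlam1 : lam ≤ 1)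
    {J : Fin (B+1) × Fin Kmax → ℝ} (hJ : MonoK J)
    (e : Fin (B+1)) {k k' : Fin Kmax} (h : k.val ≤ k'.val) :
    GVal lam J e k ≤ GVal lam J e k' := by
  unfold GVal
  have h1 := hJ (clampAdd e) k k' h
  have h2 := hJ e k k' h
  nlinarith [mul_nonneg hlam0 (sub_nonneg.2 h1),
    mul_nonneg (by linarith : (0:ℝ) ≤ 1 - lam) (sub_nonneg.2 h2)]

lemma uVal_monoK {lam alpha : ℝ} (hlam0 : 0 ≤ lam) (hlam1 : lam ≤ 1) (halpha0 : 0 ≤ alpha)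
    {J : Fin (B+1) × Fin Kmax → ℝ} (hJ : MonoK J)
    (e : Fin (B+1)) {k k' : Fin Kmax} (h : k.val ≤ k'.val) :
    uVal lam alpha J e k ≤ uVal lam alpha J e k' := by
  unfold uVal
  have hG := GVal_monoK hlam0 hlam1 hJ e (succAge_mono_val h)
  have := ageVal_mono h
  nlinarith [mul_le_mul_of_nonneg_left hG halpha0]

lemma sigVal_monoK {Es : ℕ} {lam alpha p : ℝ} (hlam0 : 0 ≤ lam) (hlam1 : lam ≤ 1)
    (halpha0 : 0 ≤ alpha) (hp0 : 0 ≤ p) (hp1 : p ≤ 1)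
    {J : Fin (B+1) × Fin Kmax → ℝ} (hJ : MonoK J)
    (e : Fin (B+1)) {k k' : Fin Kmax} (h : k.val ≤ k'.val) :
    sigVal Es lam alpha J e k p ≤ sigVal Es lam alpha J e k' p := by
  unfold sigVal
  have hone : ageOne k = ageOne k' := rfl
  rw [hone]
  have hG := GVal_monoK hlam0 hlam1 hJ (subE Es e) (succAge_mono_val h)
  have hA := ageVal_mono h
  nlinarith [mul_le_mul_of_nonneg_left hG (mul_nonneg halpha0 (by linarith : (0:ℝ) ≤ 1 - p)),
    mul_le_mul_of_nonneg_right hA (by linarith : (0:ℝ) ≤ 1 - p)]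

lemma bellman_monoK {Es m : ℕ} {lam alpha mu : ℝ} {q pr : Fin m → ℝ}
    (hlam0 : 0 ≤ lam) (hlam1 : lam ≤ 1) (halpha0 : 0 ≤ alpha)
    (hq0 : ∀ j, 0 ≤ q j) (hpr : ∀ j, 0 ≤ pr j ∧ pr j ≤ 1)
    {J : Fin (B+1) × Fin Kmax → ℝ} (hJ : MonoK J) :
    MonoK (bellman Es m lam alpha mu q pr J) := by
  intro e k k' h
  have hu := uVal_monoK hlam0 hlam1 halpha0 hJ e h
  have hv : vVal Es m lam alpha mu q pr J e k ≤ vVal Es m lam alpha mu q pr J e k' := by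
    unfold vVal
    have : ∀ j : Fin m, q j * WVal Es lam alpha J e k (pr j)
        ≤ q j * WVal Es lam alpha J e k' (pr j) := by
      intro j
      have hW : WVal Es lam alpha J e k (pr j) ≤ WVal Es lam alpha J e k' (pr j) :=
        min_le_min hu (sigVal_monoK hlam0 hlam1 halpha0 (hpr j).1 (hpr j).2 hJ e h)
      exact mul_le_mul_of_nonneg_left hW (hq0 j)
    exact add_le_add (le_refl mu) (Finset.sum_le_sum fun j _ => this j)
  unfold bellman
  by_cases hE : Es ≤ e.val
  · simp only [hE, if_true]
    exact min_le_min hu hv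
  · simp only [hE, if_false]
    exact hu

lemma abs_GVal_sub {lam : ℝ} (hlam0 : 0 ≤ lam) (hlam1 : lam ≤ 1)
    {J J' : Fin (B+1) × Fin Kmax → ℝ} {c : ℝ}
    (hc : ∀ s, |J s - J' s| ≤ c) (e : Fin (B+1)) (k : Fin Kmax) :
    |GVal lam J e k - GVal lam J' e k| ≤ c := by
  have h1 := abs_le.mp (hc (clampAdd e, k))
  have h2 := abs_le.mp (hc (e, k))
  rw [abs_le]
  unfold GVal
  constructor
  · nlinarith [mul_le_mul_of_nonneg_left h1.1 hlam0,
      mul_le_mul_of_nonneg_left h2.1 (by linarith : (0:ℝ) ≤ 1 - lam)]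
  · nlinarith [mul_le_mul_of_nonneg_left h1.2 hlam0,
      mul_le_mul_of_nonneg_left h2.2 (by linarith : (0:ℝ) ≤ 1 - lam)]

lemma abs_uVal_sub {lam alpha : ℝ} (hlam0 : 0 ≤ lam) (hlam1 : lam ≤ 1) (halpha0 : 0 ≤ alpha)
    {J J' : Fin (B+1) × Fin Kmax → ℝ} {c : ℝ}
    (hc : ∀ s, |J s - J' s| ≤ c) (e : Fin (B+1)) (k : Fin Kmax) :
    |uVal lam alpha J e k - uVal lam alpha J' e k| ≤ alpha * c := by
  have hG := abs_le.mp (abs_GVal_sub hlam0 hlam1 hc e (succAge k))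
  rw [abs_le]
  unfold uVal
  constructor
  · nlinarith [mul_le_mul_of_nonneg_left hG.1 halpha0]
  · nlinarith [mul_le_mul_of_nonneg_left hG.2 halpha0]

lemma abs_sigVal_sub {Es : ℕ} {lam alpha p : ℝ} (hlam0 : 0 ≤ lam) (hlam1 : lam ≤ 1)
    (halpha0 : 0 ≤ alpha) (hp0 : 0 ≤ p) (hp1 : p ≤ 1)
    {J J' : Fin (B+1) × Fin Kmax → ℝ} {c : ℝ}
    (hc : ∀ s, |J s - J' s| ≤ c) (e : Fin (B+1)) (k : Fin Kmax) :
    |sigVal Es lam alpha J e k p - sigVal Es lam alpha J' e k p| ≤ alpha * c := by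
  have h1 := abs_le.mp (abs_GVal_sub hlam0 hlam1 hc (subE Es e) (ageOne k))
  have h2 := abs_le.mp (abs_GVal_sub hlam0 hlam1 hc (subE Es e) (succAge k))
  rw [abs_le]
  unfold sigVal
  constructor
  · nlinarith [mul_le_mul_of_nonneg_left h1.1 (mul_nonneg halpha0 hp0),
      mul_le_mul_of_nonneg_left h2.1 (mul_nonneg halpha0 (by linarith : (0:ℝ) ≤ 1 - p))]
  · nlinarith [mul_le_mul_of_nonneg_left h1.2 (mul_nonneg halpha0 hp0),
      mul_le_mul_of_nonneg_left h2.2 (mul_nonneg halpha0 (by linarith : (0:ℝ) ≤ 1 - p))]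

lemma abs_WVal_sub {Es : ℕ} {lam alpha p : ℝ} (hlam0 : 0 ≤ lam) (hlam1 : lam ≤ 1)
    (halpha0 : 0 ≤ alpha) (hp0 : 0 ≤ p) (hp1 : p ≤ 1)
    {J J' : Fin (B+1) × Fin Kmax → ℝ} {c : ℝ}
    (hc : ∀ s, |J s - J' s| ≤ c) (e : Fin (B+1)) (k : Fin Kmax) :
    |WVal Es lam alpha J e k p - WVal Es lam alpha J' e k p| ≤ alpha * c := by
  unfold WVal
  calc |min (uVal lam alpha J e k) (sigVal Es lam alpha J e k p)
      - min (uVal lam alpha J' e k) (sigVal Es lam alpha J' e k p)|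
      ≤ max |uVal lam alpha J e k - uVal lam alpha J' e k|
          |sigVal Es lam alpha J e k p - sigVal Es lam alpha J' e k p| :=
        abs_min_sub_min_le_max _ _ _ _
    _ ≤ alpha * c := max_le (abs_uVal_sub hlam0 hlam1 halpha0 hc e k)
        (abs_sigVal_sub hlam0 hlam1 halpha0 hp0 hp1 hc e k)

lemma abs_bellman_sub {Es m : ℕ} {lam alpha mu : ℝ} {q pr : Fin m → ℝ}
    (hlam0 : 0 ≤ lam) (hlam1 : lam ≤ 1) (halpha0 : 0 ≤ alpha)
    (hq0 : ∀ j, 0 ≤ q j) (hq1 : ∑ j, q j = 1)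
    (hpr : ∀ j, 0 ≤ pr j ∧ pr j ≤ 1)
    {J J' : Fin (B+1) × Fin Kmax → ℝ} {c : ℝ}
    (hc : ∀ s, |J s - J' s| ≤ c) (s : Fin (B+1) × Fin Kmax) :
    |bellman Es m lam alpha mu q pr J s - bellman Es m lam alpha mu q pr J' s| ≤ alpha * c := by
  obtain ⟨e, k⟩ := s
  have hu := abs_uVal_sub hlam0 hlam1 halpha0 hc e k
  have hv : |vVal Es m lam alpha mu q pr J e k - vVal Es m lam alpha mu q pr J' e k|
      ≤ alpha * c := by
    unfold vVal
    rw [add_sub_add_left_eq_sub, ← Finset.sum_sub_distrib]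
    calc |∑ j, (q j * WVal Es lam alpha J e k (pr j) - q j * WVal Es lam alpha J' e k (pr j))|
        ≤ ∑ j, |q j * WVal Es lam alpha J e k (pr j) - q j * WVal Es lam alpha J' e k (pr j)| :=
          Finset.abs_sum_le_sum_abs _ _
      _ ≤ ∑ j, q j * (alpha * c) := Finset.sum_le_sum fun j _ => by
          rw [← mul_sub, abs_mul, abs_of_nonneg (hq0 j)]
          exact mul_le_mul_of_nonneg_left
            (abs_WVal_sub hlam0 hlam1 halpha0 (hpr j).1 (hpr j).2 hc e k) (hq0 j)
      _ = alpha * c := by rw [← Finset.sum_mul, hq1, one_mul]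
  unfold bellman
  by_cases hE : Es ≤ e.val
  · simp only [hE, if_true]
    calc |min (uVal lam alpha J e k) (vVal Es m lam alpha mu q pr J e k)
        - min (uVal lam alpha J' e k) (vVal Es m lam alpha mu q pr J' e k)|
        ≤ max |uVal lam alpha J e k - uVal lam alpha J' e k|
            |vVal Es m lam alpha mu q pr J e k - vVal Es m lam alpha mu q pr J' e k| :=
          abs_min_sub_min_le_max _ _ _ _
      _ ≤ alpha * c := max_le hu hv
  · simp only [hE, if_false]
    exact hu

lemma Jstar_monoK (B Es Kmax m : ℕ) (lam alpha mu : ℝ) (q pr : Fin m → ℝ)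
    (hlam0 : 0 ≤ lam) (hlam1 : lam ≤ 1)
    (halpha0 : 0 ≤ alpha) (halpha1 : alpha < 1)
    (hq0 : ∀ j, 0 ≤ q j) (hq1 : ∑ j, q j = 1)
    (hpr : ∀ j, 0 ≤ pr j ∧ pr j ≤ 1)
    (Jstar : Fin (B+1) × Fin Kmax → ℝ)
    (hfix : bellman Es m lam alpha mu q pr Jstar = Jstar) :
    MonoK Jstar := by
  set T := bellman Es m lam alpha mu q pr with hT
  set J0 : Fin (B+1) × Fin Kmax → ℝ := fun _ => 0 with hJ0
  set c0 : ℝ := ∑ s : Fin (B+1) × Fin Kmax, |Jstar s| with hc0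
  have hc0s : ∀ s, |J0 s - Jstar s| ≤ c0 := by
    intro s
    simp only [hJ0, zero_sub, abs_neg]
    exact Finset.single_le_sum (fun i _ => abs_nonneg (Jstar i)) (Finset.mem_univ s)
  have hmono : ∀ n, MonoK (T^[n] J0) := by
    intro n
    induction n with
    | zero => intro e k k' h; simp [hJ0]
    | succ n ih =>
      rw [Function.iterate_succ_apply']
      exact bellman_monoK hlam0 hlam1 halpha0 hq0 hpr ih
  have hdist : ∀ n, ∀ s, |T^[n] J0 s - Jstar s| ≤ alpha ^ n * c0 := by
    intro n
    induction n with
    | zero => simpa using hc0s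
    | succ n ih =>
      intro s
      rw [Function.iterate_succ_apply']
      have := abs_bellman_sub (Es := Es) (mu := mu) hlam0 hlam1 halpha0 hq0 hq1 hpr ih s
      have hfix' : bellman Es m lam alpha mu q pr Jstar = Jstar := hfix
      rw [hfix'] at this
      calc |T (T^[n] J0) s - Jstar s|
          = |bellman Es m lam alpha mu q pr (T^[n] J0) s - Jstar s| := rfl
        _ ≤ alpha * (alpha ^ n * c0) := this
        _ = alpha ^ (n + 1) * c0 := by ring
  intro e k k' hkk
  have key : ∀ n, Jstar (e, k) ≤ Jstar (e, k') + 2 * (alpha ^ n * c0) := by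
    intro n
    have h1 := abs_le.mp (hdist n (e, k))
    have h2 := abs_le.mp (hdist n (e, k'))
    have h3 := hmono n e k k' hkk
    linarith [h1.1, h1.2, h2.1, h2.2]
  have hlim : Filter.Tendsto (fun n => Jstar (e, k') + 2 * (alpha ^ n * c0))
      Filter.atTop (nhds (Jstar (e, k'))) := by
    have h0 : Filter.Tendsto (fun n : ℕ => alpha ^ n) Filter.atTop (nhds 0) :=
      tendsto_pow_atTop_nhds_zero_of_lt_one halpha0 halpha1
    have := ((h0.mul_const c0).const_mul 2).const_add (Jstar (e, k'))
    simpa using this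
  exact ge_of_tendsto hlim (Filter.Eventually.of_forall key)

end AuxW

theorem W_nonincreasing_in_p (B Es Kmax m : ℕ) (lam alpha mu : ℝ) (q pr : Fin m → ℝ)
    (hEs1 : 1 ≤ Es) (hEsB : Es ≤ B)
    (hlam0 : 0 ≤ lam) (hlam1 : lam ≤ 1)
    (halpha0 : 0 ≤ alpha) (halpha1 : alpha < 1)
    (hmu : 0 ≤ mu) (hK : 1 ≤ Kmax) (hm : 1 ≤ m)
    (hq0 : ∀ j, 0 ≤ q j) (hq1 : ∑ j, q j = 1)
    (hpr : ∀ j, 0 ≤ pr j ∧ pr j ≤ 1)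
    (Jstar : Fin (B+1) × Fin Kmax → ℝ)
    (hfix : bellman Es m lam alpha mu q pr Jstar = Jstar)
    (huniq : ∀ J' : Fin (B+1) × Fin Kmax → ℝ, bellman Es m lam alpha mu q pr J' = J' → J' = Jstar)
    (e : Fin (B+1)) (k : Fin Kmax) (hE : Es ≤ e.val)
    (p p' : ℝ) (hp0 : 0 ≤ p) (hpp' : p ≤ p') (hp'1 : p' ≤ 1) :
    WVal Es lam alpha Jstar e k p' ≤ WVal Es lam alpha Jstar e k p := by
  have hmono : MonoK Jstar := Jstar_monoK B Es Kmax m lam alpha mu q pr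
    hlam0 hlam1 halpha0 halpha1 hq0 hq1 hpr Jstar hfix
  unfold WVal
  apply min_le_min le_rfl
  unfold sigVal
  have hAB : GVal lam Jstar (subE Es e) (ageOne k) ≤ GVal lam Jstar (subE Es e) (succAge k) :=
    GVal_monoK hlam0 hlam1 hmono (subE Es e) (Nat.zero_le _)
  have hKn := ageVal_nonneg k
  have hbr : 0 ≤ ageVal k - alpha * GVal lam Jstar (subE Es e) (ageOne k)
      + alpha * GVal lam Jstar (subE Es e) (succAge k) := by
    nlinarith [mul_le_mul_of_nonneg_left hAB halpha0]
  nlinarith [mul_nonneg (sub_nonneg.2 hpp') hbr]
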